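/- arXiv:1504.01123 — 5 statements merged into one kernel-verified Lean document; each statement's English description precedes it below -/
import Mathlib

section
/- Let K be a positive integer, N > 0 a real number, and M_1 ≤ M_2 ≤ ... ≤ M_K real numbers with 0 < M_j ≤ N for all j. Then Σ_{s=1}^{K} Σ_{i=1}^{s} [ (∏_{j=i+1}^{K} M_j/N) · (∏_{j=1}^{i} (1 − M_j/N)) · ( Σ_{S ⊆ {i+1,...,K}, |S| = s−i} ∏_{k ∈ S} (N − M_k)/M_k ) ] = Σ_{i=1}^{K} ∏_{j=1}^{i} (1 − M_j/N), where empty products equal 1 and the inner sum over S equals 1 when s = i (only the empty set). -/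
/-!
Exchange the two sums so that the outer index is `i`. For fixed `i`, the sum over `s` of the sums
over `(s - i)`-subsets of `{i+1, …, K}` is a sum over all subsets, which factors as
`∏_{k > i} ((N - M_k)/M_k + 1) = ∏_{k > i} N/M_k`; this cancels the prefactor `∏_{k > i} M_k/N`
and leaves `∏_{j ≤ i} (1 - M_j/N)`.
-/

open Finset

namespace Finset

theorem sum_Icc_sum_powersetCard_sub {α β : Type*} [AddCommMonoid β] (t : Finset α)
    (f : Finset α → β) {i K : ℕ} (h : #t + i = K) :
    ∑ s ∈ Icc i K, ∑ S ∈ t.powersetCard (s - i), f S = ∑ S ∈ t.powerset, f S := by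
  rw [sum_powerset, ← Ico_add_one_right_eq_Icc, sum_Ico_eq_sum_range]
  refine sum_congr (by congr 1; omega) fun j _ => ?_
  rw [Nat.add_sub_cancel_left]

theorem prod_div_mul_sum_powerset_prod_sub_div {α 𝕜 : Type*} [Field 𝕜] (t : Finset α)
    (m : α → 𝕜) {c : 𝕜} (hc : c ≠ 0) (hm : ∀ k ∈ t, m k ≠ 0) :
    (∏ k ∈ t, m k / c) * ∑ S ∈ t.powerset, ∏ k ∈ S, (c - m k) / m k = 1 := by
  rw [← prod_add_one, ← prod_mul_distrib]
  refine prod_eq_one fun k hk => ?_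
  rw [div_add_one (hm k hk), sub_add_cancel, div_mul_div_cancel₀' (hm k hk), div_self hc]

end Finset

theorem traffic_memory_tradeoff_closed_form_general (K : ℕ) (N : ℝ) (hN : 0 < N)
    (M : ℕ → ℝ)
    (hpos : ∀ j ∈ Finset.Icc 1 K, 0 < M j) :
    ∑ s ∈ Finset.Icc 1 K, ∑ i ∈ Finset.Icc 1 s,
      ((∏ j ∈ Finset.Icc (i + 1) K, M j / N) *
        (∏ j ∈ Finset.Icc 1 i, (1 - M j / N)) *
        (∑ S ∈ (Finset.Icc (i + 1) K).powersetCard (s - i),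
          ∏ k ∈ S, (N - M k) / M k))
    = ∑ i ∈ Finset.Icc 1 K, ∏ j ∈ Finset.Icc 1 i, (1 - M j / N) := by
  rw [sum_comm' (t' := Icc 1 K) (s' := fun i => Icc i K)
    fun s i => by simp only [mem_Icc]; omega]
  refine sum_congr rfl fun i hi => ?_
  have hM : ∀ k ∈ Icc (i + 1) K, M k ≠ 0 := fun k hk => (hpos k (by grind)).ne'
  rw [← mul_sum, sum_Icc_sum_powersetCard_sub _ _ (by grind [Nat.card_Icc]),
    mul_right_comm, prod_div_mul_sum_powerset_prod_sub_div _ _ hN.ne' hM, one_mul]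

/-- Lemma 2 / Theorem 3: the traffic-volume formula of the decentralized coded caching
scheme `F_o` with ordered heterogeneous cache set `M_1 ≤ ... ≤ M_K`, `N` contents and
`K` users equals the closed-form expression `∑_{i=1}^K ∏_{j=1}^i (1 - M_j/N)`. -/
theorem traffic_memory_tradeoff_closed_form (K : ℕ) (hK : 0 < K) (N : ℝ) (hN : 0 < N)
    (M : ℕ → ℝ)
    (hmono : ∀ i ∈ Finset.Icc 1 K, ∀ j ∈ Finset.Icc 1 K, i ≤ j → M i ≤ M j)
    (hpos : ∀ j ∈ Finset.Icc 1 K, 0 < M j)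
    (hle : ∀ j ∈ Finset.Icc 1 K, M j ≤ N) :
    ∑ s ∈ Finset.Icc 1 K, ∑ i ∈ Finset.Icc 1 s,
      ((∏ j ∈ Finset.Icc (i + 1) K, M j / N) *
        (∏ j ∈ Finset.Icc 1 i, (1 - M j / N)) *
        (∑ S ∈ (Finset.Icc (i + 1) K).powersetCard (s - i),
          ∏ k ∈ S, (N - M k) / M k))
    = ∑ i ∈ Finset.Icc 1 K, ∏ j ∈ Finset.Icc 1 i, (1 - M j / N) :=
  traffic_memory_tradeoff_closed_form_general K N hN M hpos
end

section
/- Let K be a positive integer, N > 0 a real number, and M_1 ≤ M_2 ≤ ... ≤ M_K real numbers with 0 ≤ M_j ≤ N for all j. Let M̄ = (1/K) Σ_{k=1}^K M_k. Then Σ_{i=1}^{K} ∏_{j=1}^{i} (1 − M_j/N) ≥ Σ_{i=1}^{K} (1 − M̄/N)^i, with equality if and only if M_1 = M_2 = ... = M_K. -/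
/-!
With `x j = 1 - M j / N ∈ [0, 1]` (decreasing in `j`) and `a = 1 - M̄ / N` their mean, replace
`a, …, a` by `x 1, …, x K` one entry at a time. This telescopes the difference of the two traffic
volumes into `∑ₘ (x m - a) * w m` with `w m = (∏_{j<m} x j) * (1 + a + ⋯ + a ^ (K - m))`, which is
again decreasing in `m` because `x m ≤ 1`. As `x m - a` is decreasing with sum zero, Chebyshev's
sum inequality makes the difference nonnegative. At equality it forces
`(x 1 - x K) * (w 1 - w K) = 0`; for `K ≥ 2`, `w 1 ≥ 1 + a` and `w K ≤ 1`, so `w 1 = w K` only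
when `a = 0`, i.e. when every `x j` vanishes.
-/

open Finset

section Chebyshev

variable {ι R : Type*} [CommRing R]

theorem Finset.sum_sum_sub_mul_sub (s : Finset ι) (f g : ι → R) :
    ∑ i ∈ s, ∑ j ∈ s, (f i - f j) * (g i - g j) =
      2 * (#s * ∑ i ∈ s, f i * g i - (∑ i ∈ s, f i) * ∑ i ∈ s, g i) := by
  simp only [sub_mul, mul_sub, sum_sub_distrib, sum_const, nsmul_eq_mul, ← mul_sum, ← sum_mul]
  ring

variable [LinearOrder R] [IsStrictOrderedRing R] {s : Finset ι} {f g : ι → R}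

theorem MonovaryOn.sum_mul_nonneg_of_sum_eq_zero (hfg : MonovaryOn f g s)
    (hf : ∑ i ∈ s, f i = 0) : 0 ≤ ∑ i ∈ s, f i * g i := by
  rcases s.eq_empty_or_nonempty with rfl | hs
  · simp
  have h := sum_nonneg fun i hi => sum_nonneg fun j hj => hfg.sub_mul_sub_nonneg hj hi
  rw [sum_sum_sub_mul_sub, hf, zero_mul, sub_zero] at h
  exact nonneg_of_mul_nonneg_right (nonneg_of_mul_nonneg_right h two_pos) (by positivity)

theorem MonovaryOn.sub_mul_sub_eq_zero_of_sum_mul_eq_zero (hfg : MonovaryOn f g s)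
    (hf : ∑ i ∈ s, f i = 0) (hfg0 : ∑ i ∈ s, f i * g i = 0) {i j : ι} (hi : i ∈ s)
    (hj : j ∈ s) : (f i - f j) * (g i - g j) = 0 := by
  have hnonneg : ∀ i ∈ s, ∀ j ∈ s, 0 ≤ (f i - f j) * (g i - g j) :=
    fun i hi j hj => hfg.sub_mul_sub_nonneg hj hi
  have h := sum_sum_sub_mul_sub s f g
  rw [hf, hfg0, mul_zero, zero_mul, sub_zero, mul_zero,
    sum_eq_zero_iff_of_nonneg fun i hi => sum_nonneg (hnonneg i hi)] at h
  exact (sum_eq_zero_iff_of_nonneg (hnonneg i hi)).1 (h i hi) j hj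

end Chebyshev

section Telescoping

variable {R : Type*} [CommRing R] (x : ℕ → R) (a : R)

theorem prod_Icc_sub_pow (n : ℕ) :
    ∏ j ∈ Icc 1 n, x j - a ^ n =
      ∑ m ∈ Icc 1 n, (x m - a) * (∏ j ∈ Ico 1 m, x j) * a ^ (n - m) := by
  induction n with
  | zero => simp
  | succ n ih =>
    have hshift : ∑ m ∈ Icc 1 n, (x m - a) * (∏ j ∈ Ico 1 m, x j) * a ^ (n + 1 - m) =
        a * ∑ m ∈ Icc 1 n, (x m - a) * (∏ j ∈ Ico 1 m, x j) * a ^ (n - m) := by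
      rw [mul_sum]
      refine sum_congr rfl fun m hm => ?_
      rw [Nat.sub_add_comm (mem_Icc.1 hm).2, pow_succ]
      ring
    rw [prod_Icc_succ_top (by omega), sum_Icc_succ_top (by omega), hshift, ← ih,
      Ico_add_one_right_eq_Icc, Nat.sub_self, pow_zero, pow_succ]
    ring

/-- The coefficient of `x m - a` when the sum is telescoped along the hybrid sequences
`(x 1, …, x m, a, …, a)`. -/
def hybridWeight (K m : ℕ) : R :=
  (∏ j ∈ Ico 1 m, x j) * ∑ t ∈ range (K + 1 - m), a ^ t

theorem sum_prod_sub_sum_pow (K : ℕ) :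
    ∑ i ∈ Icc 1 K, ∏ j ∈ Icc 1 i, x j - ∑ i ∈ Icc 1 K, a ^ i =
      ∑ m ∈ Icc 1 K, (x m - a) * hybridWeight x a K m := by
  have hgeom (m : ℕ) : ∑ i ∈ Icc m K, a ^ (i - m) = ∑ t ∈ range (K + 1 - m), a ^ t := by
    rw [← Ico_add_one_right_eq_Icc, sum_Ico_eq_sum_range]
    simp only [Nat.add_sub_cancel_left]
  calc ∑ i ∈ Icc 1 K, ∏ j ∈ Icc 1 i, x j - ∑ i ∈ Icc 1 K, a ^ i
      = ∑ i ∈ Icc 1 K, ∑ m ∈ Icc 1 i, (x m - a) * (∏ j ∈ Ico 1 m, x j) * a ^ (i - m) := by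
        rw [← sum_sub_distrib]
        exact sum_congr rfl fun i _ => prod_Icc_sub_pow x a i
    _ = ∑ m ∈ Icc 1 K, ∑ i ∈ Icc m K, (x m - a) * (∏ j ∈ Ico 1 m, x j) * a ^ (i - m) :=
        sum_comm' fun i m => by simp only [mem_Icc]; omega
    _ = ∑ m ∈ Icc 1 K, (x m - a) * hybridWeight x a K m := by
        simp only [hybridWeight, ← hgeom, ← mul_sum, mul_assoc]

theorem hybridWeight_one (K : ℕ) : hybridWeight x a K 1 = ∑ t ∈ range K, a ^ t := by
  simp [hybridWeight]

end Telescoping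

section HybridWeight

variable {R : Type*} [CommRing R] [LinearOrder R] [IsStrictOrderedRing R] {x : ℕ → R} {a : R}
  {K : ℕ}

theorem hybridWeight_self_le_one (hx0 : ∀ j ∈ Icc 1 K, 0 ≤ x j)
    (hx1 : ∀ j ∈ Icc 1 K, x j ≤ 1) : hybridWeight x a K K ≤ 1 := by
  have hsub : Ico 1 K ⊆ Icc 1 K := Ico_subset_Icc_self
  simpa [hybridWeight] using prod_le_one (fun j hj => hx0 j (hsub hj)) fun j hj => hx1 j (hsub hj)

theorem hybridWeight_antitoneOn (ha : 0 ≤ a) (hx0 : ∀ j ∈ Icc 1 K, 0 ≤ x j)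
    (hx1 : ∀ j ∈ Icc 1 K, x j ≤ 1) : AntitoneOn (hybridWeight x a K) (Icc 1 K) := by
  refine antitoneOn_of_succ_le (by rw [coe_Icc]; exact Set.ordConnected_Icc) fun m _ hm hm1 => ?_
  simp only [Order.succ_eq_add_one, coe_Icc, Set.mem_Icc] at hm hm1 ⊢
  have hprod : 0 ≤ ∏ j ∈ Ico 1 m, x j :=
    prod_nonneg fun j hj => hx0 j (by simp only [mem_Ico, mem_Icc] at hj ⊢; omega)
  have hgeom (n : ℕ) : 0 ≤ ∑ t ∈ range n, a ^ t := sum_nonneg fun t _ => pow_nonneg ha t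
  calc hybridWeight x a K (m + 1)
      = (∏ j ∈ Ico 1 m, x j) * (x m * ∑ t ∈ range (K - m), a ^ t) := by
        rw [hybridWeight, prod_Ico_succ_top hm.1, Nat.add_sub_add_right, mul_assoc]
    _ ≤ (∏ j ∈ Ico 1 m, x j) * ∑ t ∈ range (K + 1 - m), a ^ t := by
        refine mul_le_mul_of_nonneg_left ?_ hprod
        calc x m * ∑ t ∈ range (K - m), a ^ t ≤ ∑ t ∈ range (K - m), a ^ t :=
              mul_le_of_le_one_left (hgeom _) (hx1 m (mem_Icc.2 hm))
          _ ≤ ∑ t ∈ range (K + 1 - m), a ^ t :=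
              sum_le_sum_of_subset_of_nonneg (range_subset_range.2 (by omega))
                fun t _ _ => pow_nonneg ha t

theorem monovaryOn_sub_hybridWeight (hx : AntitoneOn x (Icc 1 K)) (ha : 0 ≤ a)
    (hx0 : ∀ j ∈ Icc 1 K, 0 ≤ x j) (hx1 : ∀ j ∈ Icc 1 K, x j ≤ 1) :
    MonovaryOn (fun j => x j - a) (hybridWeight x a K) (Icc 1 K) :=
  AntitoneOn.monovaryOn (fun _ hi _ hj hij => sub_le_sub_right (hx hi hj hij) a)
    (hybridWeight_antitoneOn ha hx0 hx1)

theorem sum_pow_le_sum_prod (hx : AntitoneOn x (Icc 1 K)) (ha : 0 ≤ a)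
    (hx0 : ∀ j ∈ Icc 1 K, 0 ≤ x j) (hx1 : ∀ j ∈ Icc 1 K, x j ≤ 1)
    (hsum : ∑ j ∈ Icc 1 K, (x j - a) = 0) :
    ∑ i ∈ Icc 1 K, a ^ i ≤ ∑ i ∈ Icc 1 K, ∏ j ∈ Icc 1 i, x j := by
  rw [← sub_nonneg, sum_prod_sub_sum_pow]
  exact (monovaryOn_sub_hybridWeight hx ha hx0 hx1).sum_mul_nonneg_of_sum_eq_zero hsum

theorem eq_of_sum_pow_eq_sum_prod (hx : AntitoneOn x (Icc 1 K)) (ha : 0 ≤ a)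
    (hx0 : ∀ j ∈ Icc 1 K, 0 ≤ x j) (hx1 : ∀ j ∈ Icc 1 K, x j ≤ 1)
    (hsum : ∑ j ∈ Icc 1 K, (x j - a) = 0)
    (heq : ∑ i ∈ Icc 1 K, ∏ j ∈ Icc 1 i, x j = ∑ i ∈ Icc 1 K, a ^ i) :
    ∀ i ∈ Icc 1 K, ∀ j ∈ Icc 1 K, x i = x j := by
  rcases Nat.eq_zero_or_pos K with rfl | hK
  · simp
  have h1 : 1 ∈ Icc 1 K := left_mem_Icc.2 hK
  have hK' : K ∈ Icc 1 K := right_mem_Icc.2 hK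
  suffices hends : x 1 = x K by
    have hconst (i) (hi : i ∈ Icc 1 K) : x i = x K :=
      le_antisymm (hends ▸ hx h1 hi (mem_Icc.1 hi).1) (hx hi hK' (mem_Icc.1 hi).2)
    exact fun i hi j hj => (hconst i hi).trans (hconst j hj).symm
  rw [← sub_eq_zero, sum_prod_sub_sum_pow] at heq
  rcases mul_eq_zero.1 <| (monovaryOn_sub_hybridWeight hx ha hx0 hx1)
    |>.sub_mul_sub_eq_zero_of_sum_mul_eq_zero hsum heq h1 hK' with hx1K | hw
  · exact sub_left_inj.1 (sub_eq_zero.1 hx1K)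
  obtain rfl | hK2 : K = 1 ∨ 2 ≤ K := by omega
  · rfl
  have ha0 : a = 0 := by
    have hgeom : 1 + a ≤ ∑ t ∈ range K, a ^ t := by
      simpa [sum_range_succ, add_comm] using
        sum_le_sum_of_subset_of_nonneg (range_subset_range.2 hK2) fun t _ _ => pow_nonneg ha t
    have := hybridWeight_self_le_one (a := a) hx0 hx1
    rw [← sub_eq_zero.1 hw, hybridWeight_one] at this
    linarith
  subst ha0
  have hzero := (sum_eq_zero_iff_of_nonneg hx0).1 (by simpa using hsum)
  rw [hzero 1 h1, hzero K hK']

theorem sum_prod_eq_sum_pow_iff (hx : AntitoneOn x (Icc 1 K)) (ha : 0 ≤ a)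
    (hx0 : ∀ j ∈ Icc 1 K, 0 ≤ x j) (hx1 : ∀ j ∈ Icc 1 K, x j ≤ 1)
    (hsum : ∑ j ∈ Icc 1 K, (x j - a) = 0) :
    ∑ i ∈ Icc 1 K, ∏ j ∈ Icc 1 i, x j = ∑ i ∈ Icc 1 K, a ^ i ↔
      ∀ i ∈ Icc 1 K, ∀ j ∈ Icc 1 K, x i = x j := by
  refine ⟨eq_of_sum_pow_eq_sum_prod hx ha hx0 hx1 hsum, fun hconst => ?_⟩
  have hxa (m) (hm : m ∈ Icc 1 K) : x m - a = 0 := by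
    have hcard : #(Icc 1 K) • (x m - a) = 0 := by
      rw [← hsum, ← sum_const]
      exact sum_congr rfl fun j hj => by rw [hconst m hm j hj]
    exact (smul_eq_zero.1 hcard).resolve_left (card_ne_zero_of_mem hm)
  rw [← sub_eq_zero, sum_prod_sub_sum_pow]
  exact sum_eq_zero fun m hm => by rw [hxa m hm, zero_mul]

end HybridWeight

/-- Corollary 4 (Relation between two kinds of traffic volume): the heterogeneous
traffic volume `∑_{i=1}^K ∏_{j=1}^i (1 - M_j/N)` is at least the homogeneous one
`∑_{i=1}^K (1 - M̄/N)^i` with `M̄` the average cache size, with equality iff all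
cache sizes are equal. -/
theorem traffic_hetero_ge_homo (K : ℕ) (hK : 0 < K) (N : ℝ) (hN : 0 < N) (M : ℕ → ℝ)
    (hmono : ∀ i ∈ Finset.Icc 1 K, ∀ j ∈ Finset.Icc 1 K, i ≤ j → M i ≤ M j)
    (h0 : ∀ j ∈ Finset.Icc 1 K, 0 ≤ M j)
    (hle : ∀ j ∈ Finset.Icc 1 K, M j ≤ N) :
    (∑ i ∈ Finset.Icc 1 K, ∏ j ∈ Finset.Icc 1 i, (1 - M j / N))
        ≥ ∑ i ∈ Finset.Icc 1 K, (1 - ((∑ k ∈ Finset.Icc 1 K, M k) / K) / N) ^ i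
      ∧ ((∑ i ∈ Finset.Icc 1 K, ∏ j ∈ Finset.Icc 1 i, (1 - M j / N))
            = ∑ i ∈ Finset.Icc 1 K, (1 - ((∑ k ∈ Finset.Icc 1 K, M k) / K) / N) ^ i
          ↔ ∀ i ∈ Finset.Icc 1 K, ∀ j ∈ Finset.Icc 1 K, M i = M j) := by
  set x : ℕ → ℝ := fun j => 1 - M j / N
  set a : ℝ := 1 - ((∑ k ∈ Icc 1 K, M k) / K) / N
  have hx : AntitoneOn x (Icc 1 K) := fun i hi j hj hij =>
    sub_le_sub_left (div_le_div_of_nonneg_right (hmono i hi j hj hij) hN.le) 1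
  have hx0 (j) (hj : j ∈ Icc 1 K) : 0 ≤ x j := sub_nonneg.2 ((div_le_one hN).2 (hle j hj))
  have hx1 (j) (hj : j ∈ Icc 1 K) : x j ≤ 1 := sub_le_self 1 (div_nonneg (h0 j hj) hN.le)
  have ha : 0 ≤ a := by
    refine sub_nonneg.2 ((div_le_one hN).2 (div_le_of_le_mul₀ (Nat.cast_nonneg K) hN.le ?_))
    simpa [mul_comm] using sum_le_card_nsmul _ _ _ hle
  have hsum : ∑ j ∈ Icc 1 K, (x j - a) = 0 := by
    have hK0 : (K : ℝ) ≠ 0 := Nat.cast_ne_zero.2 hK.ne'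
    simp only [x, a, sub_sub_sub_cancel_left, ← sub_div, ← sum_div, sum_sub_distrib, sum_const,
      Nat.card_Icc, add_tsub_cancel_right, nsmul_eq_mul, mul_div_cancel_left₀ _ hK0, sub_self,
      zero_div]
  refine ⟨sum_pow_le_sum_prod hx ha hx0 hx1 hsum, ?_⟩
  rw [sum_prod_eq_sum_pow_iff hx ha hx0 hx1 hsum]
  simp only [x, sub_right_inj, div_left_inj' hN.ne']
end

section
/- Let K ≥ 2 be a positive integer, N > 0 a real number, and M_1 ≤ M_2 ≤ ... ≤ M_K real numbers with 0 ≤ M_j ≤ N for all j. Fix i with 1 ≤ i ≤ K − 1 and let M' be the sequence obtained from M by replacing both M_i and M_{i+1} with their average (M_i + M_{i+1})/2 (the sequence M' is still nondecreasing). Then Σ_{t=1}^{K} ∏_{j=1}^{t} (1 − M'_j/N) ≤ Σ_{t=1}^{K} ∏_{j=1}^{t} (1 − M_j/N), with equality if and only if M_i = M_{i+1}. -/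
/-!
With `a j = 1 - M j / N ∈ [0, 1]` nonincreasing, the traffic sum in Horner form reads
`P + C * (x * (1 + y * (1 + T)))` with `x = a i`, `y = a (i + 1)`, where the head `P`, the prefix
product `C ≥ 0` and the tail `T` do not involve `x, y`. Averaging `x` and `y` lowers the sum by
`C * (x - y) / 2 * (1 - (x - y) * (1 + T) / 2)`. Since every tail entry is at most `y`, `1 + T` is
dominated by the geometric series `∑ y ^ k`, so `(x - y) * (1 + T) ≤ (1 - y) * (1 + T) ≤ 1` and the
last factor is positive; and `C > 0` as soon as `x > y ≥ 0`.
-/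

open Finset

section CommRing

variable {R : Type*} [CommRing R]

def prefixProdSum (a : ℕ → R) (m n : ℕ) : R :=
  ∑ t ∈ Ico m n, ∏ j ∈ Ico m (t + 1), a j

theorem sum_Icc_prod_Icc_eq_prefixProdSum (a : ℕ → R) (m n : ℕ) :
    ∑ t ∈ Icc m n, ∏ j ∈ Icc m t, a j = prefixProdSum a m (n + 1) := by
  simp only [prefixProdSum, Ico_add_one_right_eq_Icc]

theorem prefixProdSum_congr {a b : ℕ → R} {m n : ℕ} (h : ∀ j ∈ Ico m n, a j = b j) :
    prefixProdSum a m n = prefixProdSum b m n :=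
  sum_congr rfl fun t ht => prod_congr rfl fun j hj => h j <| by
    simp only [mem_Ico] at ht hj ⊢; omega

theorem prefixProdSum_of_le (a : ℕ → R) {m n : ℕ} (h : n ≤ m) : prefixProdSum a m n = 0 := by
  rw [prefixProdSum, Ico_eq_empty_of_le h, sum_empty]

theorem prefixProdSum_of_lt (a : ℕ → R) {m n : ℕ} (h : m < n) :
    prefixProdSum a m n = a m * (1 + prefixProdSum a (m + 1) n) := by
  rw [prefixProdSum, sum_eq_sum_Ico_succ_bot h, Ico_add_one_right_eq_Icc, Icc_self, prod_singleton,
    mul_add, mul_one, prefixProdSum, mul_sum]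
  congr 1
  refine sum_congr rfl fun t ht => prod_eq_prod_Ico_succ_bot ?_ a
  simp only [mem_Ico] at ht; omega

theorem prefixProdSum_append (a : ℕ → R) {m k n : ℕ} (hmk : m ≤ k) (hkn : k ≤ n) :
    prefixProdSum a m n = prefixProdSum a m k + (∏ j ∈ Ico m k, a j) * prefixProdSum a k n := by
  rw [prefixProdSum, ← sum_Ico_consecutive _ hmk hkn, prefixProdSum, prefixProdSum, mul_sum]
  congr 1
  refine sum_congr rfl fun t ht => (prod_Ico_consecutive a hmk ?_).symm
  simp only [mem_Ico] at ht; omega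

theorem prefixProdSum_split_at_pair (a : ℕ → R) {m i n : ℕ} (hmi : m ≤ i) (hin : i + 2 ≤ n) :
    prefixProdSum a m n = prefixProdSum a m i +
      (∏ j ∈ Ico m i, a j) * (a i * (1 + a (i + 1) * (1 + prefixProdSum a (i + 2) n))) := by
  rw [prefixProdSum_append a hmi (by omega : i ≤ n), prefixProdSum_of_lt a (by omega : i < n),
    prefixProdSum_of_lt a (by omega : i + 1 < n)]

end CommRing

section LinearOrderedField

variable {R : Type*} [Field R] [LinearOrder R] [IsStrictOrderedRing R]

theorem prefixProdSum_sub_of_average {a b : ℕ → R} {m i n : ℕ} (hmi : m ≤ i) (hin : i + 2 ≤ n)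
    (hb : ∀ j, b j = if j = i ∨ j = i + 1 then (a i + a (i + 1)) / 2 else a j) :
    prefixProdSum a m n - prefixProdSum b m n = (∏ j ∈ Ico m i, a j) * ((a i - a (i + 1)) / 2) *
      (1 - (a i - a (i + 1)) * (1 + prefixProdSum a (i + 2) n) / 2) := by
  have hb_eq : ∀ j, j < i ∨ i + 1 < j → b j = a j := fun j hj => by
    rw [hb j, if_neg (by omega)]
  have hprefix : ∀ j ∈ Ico m i, b j = a j := fun j hj => hb_eq j (by simp only [mem_Ico] at hj; omega)
  have hsuffix : ∀ j ∈ Ico (i + 2) n, b j = a j := fun j hj =>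
    hb_eq j (by simp only [mem_Ico] at hj; omega)
  rw [prefixProdSum_split_at_pair a hmi hin, prefixProdSum_split_at_pair b hmi hin,
    prefixProdSum_congr hprefix, prod_congr rfl hprefix, prefixProdSum_congr hsuffix, hb i, hb (i + 1),
    if_pos (Or.inl rfl), if_pos (Or.inr rfl)]
  ring

theorem prefixProdSum_nonneg {a : ℕ → R} {m n : ℕ} (ha : ∀ j ∈ Ico m n, 0 ≤ a j) :
    0 ≤ prefixProdSum a m n :=
  sum_nonneg fun t ht => prod_nonneg fun j hj => ha j <| by
    simp only [mem_Ico] at ht hj ⊢; omega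

theorem one_sub_mul_one_add_prefixProdSum_le_one {a : ℕ → R} {c : R} {m n : ℕ} (hc : 0 ≤ c)
    (ha : ∀ j ∈ Ico m n, 0 ≤ a j ∧ a j ≤ c) : (1 - c) * (1 + prefixProdSum a m n) ≤ 1 := by
  rcases lt_or_ge m n with hmn | hnm
  · have ih := one_sub_mul_one_add_prefixProdSum_le_one (m := m + 1) (n := n) hc fun j hj =>
      ha j (by simp only [mem_Ico] at hj ⊢; omega)
    obtain ⟨ham, hamc⟩ := ha m (by simp [hmn])
    rw [prefixProdSum_of_lt a hmn]
    linarith [mul_le_mul_of_nonneg_left ih ham]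
  · rw [prefixProdSum_of_le a hnm]
    linarith
termination_by n - m

theorem prefixProdSum_average_le_and_eq_iff {a b : ℕ → R} {m i n : ℕ} (hmi : m ≤ i)
    (hin : i + 2 ≤ n) (ha : ∀ j ∈ Ico m n, 0 ≤ a j) (hai : a i ≤ 1) (hanti : AntitoneOn a (Set.Ico m n))
    (hb : ∀ j, b j = if j = i ∨ j = i + 1 then (a i + a (i + 1)) / 2 else a j) :
    prefixProdSum b m n ≤ prefixProdSum a m n ∧
      (prefixProdSum b m n = prefixProdSum a m n ↔ a i = a (i + 1)) := by
  have hmem : ∀ {j}, m ≤ j → j < n → j ∈ Set.Ico m n := fun h₁ h₂ => ⟨h₁, h₂⟩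
  set C := ∏ j ∈ Ico m i, a j
  set d := a i - a (i + 1)
  set T := prefixProdSum a (i + 2) n
  have hd : 0 ≤ d := sub_nonneg.2 <| hanti (hmem hmi (by omega)) (hmem (by omega) (by omega)) (by omega)
  have hC : 0 ≤ C := prod_nonneg fun j hj => ha j (by simp only [mem_Ico] at hj ⊢; omega)
  have hdT : d * (1 + T) ≤ 1 := by
    have hT : 0 ≤ T := prefixProdSum_nonneg fun j hj => ha j (by simp only [mem_Ico] at hj ⊢; omega)
    have htail := one_sub_mul_one_add_prefixProdSum_le_one (m := i + 2) (n := n)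
      (ha (i + 1) (by simp only [mem_Ico]; omega)) fun j hj => by
        simp only [mem_Ico] at hj
        exact ⟨ha j (by simp only [mem_Ico]; omega),
          hanti (hmem (by omega) (by omega)) (hmem (by omega) hj.2) (by omega)⟩
    linarith [mul_le_mul_of_nonneg_right (by linarith : d ≤ 1 - a (i + 1)) (by linarith : 0 ≤ 1 + T)]
  have hgap : 0 < 1 - d * (1 + T) / 2 := by linarith
  have hkey : prefixProdSum a m n - prefixProdSum b m n = C * (d / 2) * (1 - d * (1 + T) / 2) :=
    prefixProdSum_sub_of_average hmi hin hb
  refine ⟨sub_nonneg.1 (hkey ▸ by positivity), ⟨fun heq => ?_, fun heq => ?_⟩⟩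
  · by_contra hne
    have hd_pos : 0 < d := lt_of_le_of_ne hd (Ne.symm (sub_ne_zero.2 hne))
    have hC_pos : 0 < C := prod_pos fun j hj => by
      simp only [mem_Ico] at hj
      have := hanti (hmem hj.1 (by omega)) (hmem hmi (by omega)) hj.2.le
      linarith [ha (i + 1) (by simp only [mem_Ico]; omega)]
    have : 0 < C * (d / 2) * (1 - d * (1 + T) / 2) := by positivity
    linarith
  · have : d = 0 := sub_eq_zero.2 heq
    rw [this, zero_div, mul_zero, zero_mul] at hkey
    exact (sub_eq_zero.1 hkey).symm

end LinearOrderedField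

theorem traffic_averaging_step_general (K : ℕ) (N : ℝ) (hN : 0 < N) (M : ℕ → ℝ)
    (hmono : ∀ i ∈ Finset.Icc 1 K, ∀ j ∈ Finset.Icc 1 K, i ≤ j → M i ≤ M j)
    (h0 : ∀ j ∈ Finset.Icc 1 K, 0 ≤ M j)
    (hle : ∀ j ∈ Finset.Icc 1 K, M j ≤ N)
    (i : ℕ) (hi1 : 1 ≤ i) (hiK : i ≤ K - 1)
    (M' : ℕ → ℝ)
    (hM' : ∀ j, M' j = if j = i ∨ j = i + 1 then (M i + M (i + 1)) / 2 else M j) :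
    (∑ t ∈ Finset.Icc 1 K, ∏ j ∈ Finset.Icc 1 t, (1 - M' j / N))
        ≤ ∑ t ∈ Finset.Icc 1 K, ∏ j ∈ Finset.Icc 1 t, (1 - M j / N)
      ∧ ((∑ t ∈ Finset.Icc 1 K, ∏ j ∈ Finset.Icc 1 t, (1 - M' j / N))
            = ∑ t ∈ Finset.Icc 1 K, ∏ j ∈ Finset.Icc 1 t, (1 - M j / N)
          ↔ M i = M (i + 1)) := by
  have hIcc : ∀ {j}, j ∈ Set.Ico 1 (K + 1) → j ∈ Icc 1 K := fun hj => by
    simp only [Set.mem_Ico, mem_Icc] at hj ⊢; omega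
  have key := prefixProdSum_average_le_and_eq_iff (a := fun j => 1 - M j / N)
    (b := fun j => 1 - M' j / N) hi1 (show i + 2 ≤ K + 1 by omega)
    (fun j hj => sub_nonneg.2 <| (div_le_one hN).2 <| hle j (hIcc (coe_Ico 1 (K + 1) ▸ hj)))
    (sub_le_self _ <| div_nonneg (h0 i (by simp only [mem_Icc]; omega)) hN.le)
    (fun j hj k hk hjk => sub_le_sub_left (div_le_div_of_nonneg_right
      (hmono j (hIcc hj) k (hIcc hk) hjk) hN.le) 1)
    (fun j => by rw [hM' j]; split_ifs <;> ring)
  simpa only [← sum_Icc_prod_Icc_eq_prefixProdSum, sub_right_inj, div_left_inj' hN.ne'] using key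

/-- The averaging step in the proof of Corollary 4: replacing two adjacent cache sizes
`M_i ≤ M_{i+1}` by their common average never increases the traffic-volume formula,
and strictly decreases it unless `M_i = M_{i+1}`. -/
theorem traffic_averaging_step (K : ℕ) (hK : 2 ≤ K) (N : ℝ) (hN : 0 < N) (M : ℕ → ℝ)
    (hmono : ∀ i ∈ Finset.Icc 1 K, ∀ j ∈ Finset.Icc 1 K, i ≤ j → M i ≤ M j)
    (h0 : ∀ j ∈ Finset.Icc 1 K, 0 ≤ M j)
    (hle : ∀ j ∈ Finset.Icc 1 K, M j ≤ N)
    (i : ℕ) (hi1 : 1 ≤ i) (hiK : i ≤ K - 1)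
    (M' : ℕ → ℝ)
    (hM' : ∀ j, M' j = if j = i ∨ j = i + 1 then (M i + M (i + 1)) / 2 else M j) :
    (∑ t ∈ Finset.Icc 1 K, ∏ j ∈ Finset.Icc 1 t, (1 - M' j / N))
        ≤ ∑ t ∈ Finset.Icc 1 K, ∏ j ∈ Finset.Icc 1 t, (1 - M j / N)
      ∧ ((∑ t ∈ Finset.Icc 1 K, ∏ j ∈ Finset.Icc 1 t, (1 - M' j / N))
            = ∑ t ∈ Finset.Icc 1 K, ∏ j ∈ Finset.Icc 1 t, (1 - M j / N)
          ↔ M i = M (i + 1)) :=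
  traffic_averaging_step_general K N hN M hmono h0 hle i hi1 hiK M' hM'
end

section
/- Let K be a positive integer, N > 0 a real number, and M_1 ≤ M_2 ≤ ... ≤ M_K real numbers with 0 ≤ M_j ≤ N for all j. Define g(s) = s − s·(Σ_{i=1}^{s} M_i)/N for integer s with 1 ≤ s ≤ K. Suppose s* with 1 ≤ s* ≤ K satisfies Σ_{i=1}^{s*} M_i + (s* − 1)·M_{s*} ≤ N, and additionally either s* = K or Σ_{i=1}^{s*+1} M_i + s*·M_{s*+1} > N. Then g(s*) ≥ g(s) for every integer s with 1 ≤ s ≤ K. -/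
/-!
Write `S(s) = ∑_{i ≤ s} M_i` and `f(s) = S(s) + (s - 1) M_s`. Then
`g(s + 1) - g(s) = (N - f(s + 1)) / N`, and `f` is nondecreasing because `M` is nondecreasing
and nonnegative. So `g` increases while `f ≤ N` and decreases once `f > N`: it is unimodal, with
its peak at the last `s` where `f(s) ≤ N`, which is exactly what the two conditions on `s⋆` say.
-/

open Finset

namespace CutSet

noncomputable def cutsetBound (N : ℝ) (M : ℕ → ℝ) (s : ℕ) : ℝ :=
  s - s * (∑ i ∈ Icc 1 s, M i) / N

noncomputable def cutsetThreshold (M : ℕ → ℝ) (s : ℕ) : ℝ :=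
  (∑ i ∈ Icc 1 s, M i) + (s - 1) * M s

variable {N : ℝ} {M : ℕ → ℝ}

lemma sum_Icc_one_succ (M : ℕ → ℝ) (s : ℕ) :
    ∑ i ∈ Icc 1 (s + 1), M i = ∑ i ∈ Icc 1 s, M i + M (s + 1) :=
  sum_Icc_succ_top (by omega) M

lemma cutsetThreshold_succ (M : ℕ → ℝ) (s : ℕ) :
    cutsetThreshold M (s + 1) = ∑ i ∈ Icc 1 s, M i + (s + 1) * M (s + 1) := by
  rw [cutsetThreshold, sum_Icc_one_succ]
  push_cast
  ring

lemma cutsetBound_succ_sub (hN : N ≠ 0) (s : ℕ) :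
    cutsetBound N M (s + 1) - cutsetBound N M s = (N - cutsetThreshold M (s + 1)) / N := by
  rw [cutsetBound, cutsetBound, cutsetThreshold_succ, sum_Icc_one_succ]
  field_simp
  push_cast
  ring

lemma cutsetThreshold_monotoneOn {K : ℕ} (hmono : MonotoneOn M (Set.Icc 1 K))
    (h0 : ∀ j ∈ Set.Icc 1 K, 0 ≤ M j) : MonotoneOn (cutsetThreshold M) (Set.Icc 1 K) := by
  refine monotoneOn_of_le_succ Set.ordConnected_Icc fun n _ hn hn' => ?_
  rw [Order.succ_eq_add_one] at hn' ⊢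
  have hM : M n ≤ M (n + 1) := hmono hn hn' n.le_succ
  rw [cutsetThreshold, cutsetThreshold_succ]
  -- the increment is `2 M n + (n + 1) (M (n + 1) - M n)`
  linarith [h0 n hn, mul_le_mul_of_nonneg_left hM (by positivity : (0 : ℝ) ≤ n + 1)]

lemma cutsetBound_monotoneOn (hN : 0 < N) {a b : ℕ}
    (h : ∀ n ∈ Set.Ioc a b, cutsetThreshold M n ≤ N) :
    MonotoneOn (cutsetBound N M) (Set.Icc a b) := by
  refine monotoneOn_of_le_succ Set.ordConnected_Icc fun n _ ⟨han, _⟩ ⟨_, hnb⟩ => ?_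
  rw [Order.succ_eq_add_one] at hnb ⊢
  have hstep := cutsetBound_succ_sub (M := M) hN.ne' n
  have : 0 ≤ (N - cutsetThreshold M (n + 1)) / N :=
    div_nonneg (sub_nonneg.2 (h _ ⟨by omega, hnb⟩)) hN.le
  linarith

lemma cutsetBound_antitoneOn (hN : 0 < N) {a b : ℕ}
    (h : ∀ n ∈ Set.Ioc a b, N ≤ cutsetThreshold M n) :
    AntitoneOn (cutsetBound N M) (Set.Icc a b) := by
  refine antitoneOn_of_succ_le Set.ordConnected_Icc fun n _ ⟨han, _⟩ ⟨_, hnb⟩ => ?_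
  rw [Order.succ_eq_add_one] at hnb ⊢
  have hstep := cutsetBound_succ_sub (M := M) hN.ne' n
  have : (N - cutsetThreshold M (n + 1)) / N ≤ 0 :=
    div_nonpos_of_nonpos_of_nonneg (sub_nonpos.2 (h _ ⟨by omega, hnb⟩)) hN.le
  linarith

end CutSet

open CutSet

theorem cutset_maximizer_characterization_general (K : ℕ) (N : ℝ) (hN : 0 < N)
    (M : ℕ → ℝ)
    (hmono : ∀ i ∈ Finset.Icc 1 K, ∀ j ∈ Finset.Icc 1 K, i ≤ j → M i ≤ M j)
    (h0 : ∀ j ∈ Finset.Icc 1 K, 0 ≤ M j)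
    (sstar : ℕ) (hs1 : 1 ≤ sstar) (hsK : sstar ≤ K)
    (hcond1 : (∑ i ∈ Finset.Icc 1 sstar, M i) + ((sstar : ℝ) - 1) * M sstar ≤ N)
    (hcond2 : sstar = K ∨
      (∑ i ∈ Finset.Icc 1 (sstar + 1), M i) + (sstar : ℝ) * M (sstar + 1) > N) :
    ∀ s ∈ Finset.Icc 1 K,
      (sstar : ℝ) - (sstar : ℝ) * (∑ i ∈ Finset.Icc 1 sstar, M i) / N
        ≥ (s : ℝ) - (s : ℝ) * (∑ i ∈ Finset.Icc 1 s, M i) / N := by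
  have hthr : MonotoneOn (cutsetThreshold M) (Set.Icc 1 K) :=
    cutsetThreshold_monotoneOn
      (fun i hi j hj => hmono i (Finset.mem_Icc.2 hi) j (Finset.mem_Icc.2 hj))
      (fun j hj => h0 j (Finset.mem_Icc.2 hj))
  intro s hs
  rw [Finset.mem_Icc] at hs
  change cutsetBound N M s ≤ cutsetBound N M sstar
  rcases le_total s sstar with hle | hge
  · refine cutsetBound_monotoneOn hN (fun n ⟨hsn, hn⟩ => ?_) ⟨hs.1, hle⟩ ⟨hs1, le_rfl⟩ hle
    exact (hthr ⟨by omega, by omega⟩ ⟨hs1, hsK⟩ hn).trans hcond1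
  · refine cutsetBound_antitoneOn hN (fun n ⟨hsn, hn⟩ => ?_) ⟨le_rfl, hsK⟩ ⟨hge, hs.2⟩ hge
    obtain rfl | hcross := hcond2
    · omega
    have hcross' : N < cutsetThreshold M (sstar + 1) := by
      rw [cutsetThreshold_succ]
      rw [sum_Icc_one_succ] at hcross
      linarith
    exact hcross'.le.trans (hthr ⟨by omega, by omega⟩ ⟨by omega, hn⟩ hsn)

/-- Insight (1) on the lower bound: for ordered cache sizes the (continuously relaxed)
cut-set bound `g(s) = s - s (∑_{i=1}^s M_i)/N` attains its maximum over `1 ≤ s ≤ K` at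
the `s⋆` determined by `∑_{i=1}^{s⋆} M_i + (s⋆-1) M_{s⋆} ≤ N` and (unless `s⋆ = K`)
`∑_{i=1}^{s⋆+1} M_i + s⋆ M_{s⋆+1} > N`. -/
theorem cutset_maximizer_characterization (K : ℕ) (hK : 0 < K) (N : ℝ) (hN : 0 < N)
    (M : ℕ → ℝ)
    (hmono : ∀ i ∈ Finset.Icc 1 K, ∀ j ∈ Finset.Icc 1 K, i ≤ j → M i ≤ M j)
    (h0 : ∀ j ∈ Finset.Icc 1 K, 0 ≤ M j)
    (hle : ∀ j ∈ Finset.Icc 1 K, M j ≤ N)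
    (sstar : ℕ) (hs1 : 1 ≤ sstar) (hsK : sstar ≤ K)
    (hcond1 : (∑ i ∈ Finset.Icc 1 sstar, M i) + ((sstar : ℝ) - 1) * M sstar ≤ N)
    (hcond2 : sstar = K ∨
      (∑ i ∈ Finset.Icc 1 (sstar + 1), M i) + (sstar : ℝ) * M (sstar + 1) > N) :
    ∀ s ∈ Finset.Icc 1 K,
      (sstar : ℝ) - (sstar : ℝ) * (∑ i ∈ Finset.Icc 1 sstar, M i) / N
        ≥ (s : ℝ) - (s : ℝ) * (∑ i ∈ Finset.Icc 1 s, M i) / N :=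
  cutset_maximizer_characterization_general K N hN M hmono h0 sstar hs1 hsK hcond1 hcond2
end

section
/- Let N and K be positive integers with K ≤ N, and let M_1 ≤ M_2 ≤ ... ≤ M_K be real numbers with 0 ≤ M_j ≤ N for all j. Then Σ_{i=1}^{K} ∏_{j=1}^{i} (1 − M_j/N) ≤ 12 · max_{1 ≤ s ≤ K} ( s − (Σ_{i=1}^{s} M_i)/⌊N/s⌋ ), where ⌊N/s⌋ denotes integer floor division (note ⌊N/s⌋ ≥ 1 since s ≤ K ≤ N). -/
/-!
Write `x j = 1 - M j / N` and let `s` be the largest index `≤ K` with `M 1 + ⋯ + M s ≤ N / 4`.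
Since `s ≤ N` gives `N ≤ (2s - 1) ⌊N/s⌋`, the `s`-th cut-set term is at least
`s - (2s - 1)/4 = (2s + 1)/4`. In the traffic volume the first `s` summands are at most `1`,
and from index `s + 1` on every factor is at most `r = x (s + 1)`, so the remaining summands
form a geometric tail of at most `r / (1 - r)`. By monotonicity
`M (s + 1) ≥ (M 1 + ⋯ + M (s + 1)) / (s + 1) > N / (4 (s + 1))`, whence `r / (1 - r) ≤ 4 (s + 1) r`.
For `s ≥ 1` this gives `R_F ≤ 5s + 4 ≤ 12 (2s + 1)/4`; for `s = 0` it gives `R_F ≤ 4 x 1`, and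
`x 1` is the first cut-set term.
-/

open Finset

lemma sum_Ioc_pow_sub_le {r : ℝ} (hr0 : 0 ≤ r) (hr1 : r < 1) (s K : ℕ) :
    ∑ i ∈ Ioc s K, r ^ (i - s) ≤ r / (1 - r) :=
  calc ∑ i ∈ Ioc s K, r ^ (i - s) = ∑ k ∈ Ico 1 (K - s + 1), r ^ k :=
        sum_nbij' (· - s) (· + s) (by intro i; simp; omega) (by intro k; simp; omega)
          (by intro i; simp; omega) (by intro k; simp) (fun _ _ => rfl)
    _ ≤ r ^ 1 / (1 - r) := geom_sum_Ico_le_of_lt_one hr0 hr1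
    _ = r / (1 - r) := by rw [pow_one]

lemma prod_Icc_le_pow_sub (x : ℕ → ℝ) {s i : ℕ} {r : ℝ} (hx0 : ∀ j ∈ Icc 1 i, 0 ≤ x j)
    (hx1 : ∀ j ∈ Icc 1 s, x j ≤ 1) (hxr : ∀ j ∈ Ioc s i, x j ≤ r) :
    ∏ j ∈ Icc 1 i, x j ≤ r ^ (i - s) :=
  calc ∏ j ∈ Icc 1 i, x j ≤ ∏ j ∈ Ioc s i, x j :=
        prod_le_prod_of_subset_of_le_one (by intro j; simp; omega) hx0
          (fun j hj hjs => hx1 j (by simp at hj hjs ⊢; omega))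
    _ ≤ ∏ _j ∈ Ioc s i, r :=
        prod_le_prod (fun j hj => hx0 j (by simp at hj ⊢; omega)) hxr
    _ = r ^ (i - s) := by rw [prod_const, Nat.card_Ioc]

lemma sum_prod_Icc_le_add_div_one_sub (x : ℕ → ℝ) {s K : ℕ} (hsK : s ≤ K) {r : ℝ}
    (hr0 : 0 ≤ r) (hr1 : r < 1)
    (hx0 : ∀ j ∈ Icc 1 K, 0 ≤ x j) (hx1 : ∀ j ∈ Icc 1 s, x j ≤ 1)
    (hxr : ∀ j ∈ Ioc s K, x j ≤ r) :
    ∑ i ∈ Icc 1 K, ∏ j ∈ Icc 1 i, x j ≤ s + r / (1 - r) := by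
  have head : ∑ i ∈ Ioc 0 s, ∏ j ∈ Icc 1 i, x j ≤ s := by
    have := sum_le_card_nsmul (Ioc 0 s) (fun i => ∏ j ∈ Icc 1 i, x j) 1 fun i hi =>
      prod_le_one (fun j hj => hx0 j (by simp at hi hj ⊢; omega))
        (fun j hj => hx1 j (by simp at hi hj ⊢; omega))
    simpa using this
  have tail : ∑ i ∈ Ioc s K, ∏ j ∈ Icc 1 i, x j ≤ r / (1 - r) :=
    calc ∑ i ∈ Ioc s K, ∏ j ∈ Icc 1 i, x j ≤ ∑ i ∈ Ioc s K, r ^ (i - s) :=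
          sum_le_sum fun i hi => prod_Icc_le_pow_sub x
            (fun j hj => hx0 j (by simp at hi hj ⊢; omega)) hx1
            (fun j hj => hxr j (by simp at hi hj ⊢; omega))
      _ ≤ r / (1 - r) := sum_Ioc_pow_sub_le hr0 hr1 s K
  rw [show Icc 1 K = Ioc 0 K from Icc_add_one_left_eq_Ioc 0 K,
    ← sum_Ioc_consecutive _ (Nat.zero_le s) hsK]
  exact add_le_add head tail

lemma div_one_sub_le_mul {r c : ℝ} (hr0 : 0 ≤ r) (hr1 : r < 1) (hc : 1 ≤ c * (1 - r)) :
    r / (1 - r) ≤ c * r := by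
  rw [div_le_iff₀ (sub_pos.mpr hr1)]
  nlinarith

lemma sum_Icc_le_mul_of_monotoneOn {M : ℕ → ℝ} {n : ℕ} (hM : MonotoneOn M (Icc 1 n : Set ℕ)) :
    ∑ i ∈ Icc 1 n, M i ≤ n * M n := by
  rcases Nat.eq_zero_or_pos n with rfl | hn
  · simp
  have := sum_le_card_nsmul (Icc 1 n) M (M n) fun i hi =>
    hM (by simpa using hi) (by simp; omega) (mem_Icc.mp hi).2
  simpa using this

lemma Nat.add_div_le_two_mul_mul_div {s N : ℕ} (hs : 0 < s) (hsN : s ≤ N) :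
    N + N / s ≤ 2 * s * (N / s) := by
  have h1 := Nat.div_add_mod N s
  have h2 := Nat.mod_lt N hs
  have h3 : 1 ≤ N / s := Nat.div_pos hsN hs
  nlinarith

noncomputable def cutSetTerm (N : ℕ) (M : ℕ → ℝ) (s : ℕ) : ℝ :=
  s - (∑ i ∈ Icc 1 s, M i) / ((N / s : ℕ) : ℝ)

lemma cutSetTerm_one (N : ℕ) (M : ℕ → ℝ) : cutSetTerm N M 1 = 1 - M 1 / N := by
  simp [cutSetTerm]

lemma le_cutSetTerm_of_sum_le {N s : ℕ} {M : ℕ → ℝ} (hs : 0 < s) (hsN : s ≤ N)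
    (hA : ∑ i ∈ Icc 1 s, M i ≤ N / 4) : (2 * s + 1) / 4 ≤ cutSetTerm N M s := by
  have hq : (0 : ℝ) < (N / s : ℕ) := by exact_mod_cast Nat.div_pos hsN hs
  have hfloor : (N : ℝ) + (N / s : ℕ) ≤ 2 * s * (N / s : ℕ) := by
    exact_mod_cast Nat.add_div_le_two_mul_mul_div hs hsN
  have : (∑ i ∈ Icc 1 s, M i) / ((N / s : ℕ) : ℝ) ≤ (2 * s - 1) / 4 := by
    rw [div_le_iff₀ hq]; nlinarith
  unfold cutSetTerm; linarith

noncomputable def traffic (N : ℕ) (M : ℕ → ℝ) (K : ℕ) : ℝ :=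
  ∑ i ∈ Icc 1 K, ∏ j ∈ Icc 1 i, (1 - M j / N)

section Traffic

variable {N K : ℕ} {M : ℕ → ℝ}

lemma one_sub_div_nonneg (hN : 0 < N) (hle : ∀ j ∈ Icc 1 K, M j ≤ N) :
    ∀ j ∈ Icc 1 K, 0 ≤ 1 - M j / N := fun j hj =>
  sub_nonneg.mpr ((div_le_one (Nat.cast_pos.mpr hN)).mpr (hle j hj))

lemma one_sub_div_le_one (h0 : ∀ j ∈ Icc 1 K, 0 ≤ M j) :
    ∀ j ∈ Icc 1 K, 1 - M j / N ≤ 1 := fun j hj =>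
  sub_le_self _ (div_nonneg (h0 j hj) N.cast_nonneg)

lemma traffic_le (hN : 0 < N) (h0 : ∀ j ∈ Icc 1 K, 0 ≤ M j) (hle : ∀ j ∈ Icc 1 K, M j ≤ N) :
    traffic N M K ≤ K := by
  simpa [traffic] using sum_prod_Icc_le_add_div_one_sub _ le_rfl le_rfl zero_lt_one
    (one_sub_div_nonneg hN hle) (one_sub_div_le_one h0) (by simp)

lemma traffic_le_of_lt_sum (hN : 0 < N) (hmono : MonotoneOn M (Icc 1 K : Set ℕ))
    (h0 : ∀ j ∈ Icc 1 K, 0 ≤ M j) (hle : ∀ j ∈ Icc 1 K, M j ≤ N) {s : ℕ} (hsK : s < K)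
    (hA : N / 4 < ∑ i ∈ Icc 1 (s + 1), M i) :
    traffic N M K ≤ s + 4 * (s + 1) * (1 - M (s + 1) / N) := by
  have hNR : (0 : ℝ) < N := Nat.cast_pos.mpr hN
  have hs1 : s + 1 ∈ Icc 1 K := by simp; omega
  have hx0 := one_sub_div_nonneg hN hle
  have hsum : ∑ i ∈ Icc 1 (s + 1), M i ≤ (s + 1 : ℕ) * M (s + 1) :=
    sum_Icc_le_mul_of_monotoneOn (hmono.mono (by intro i; simp; omega))
  set r := 1 - M (s + 1) / N with hr
  have hc : 1 ≤ 4 * (s + 1) * (1 - r) := by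
    push_cast at hsum
    rw [hr, sub_sub_cancel, mul_div_assoc', le_div_iff₀ hNR]
    linarith
  have hr1 : r < 1 := by nlinarith
  have hxr : ∀ j ∈ Ioc s K, 1 - M j / N ≤ r := fun j hj =>
    sub_le_sub_left (div_le_div_of_nonneg_right
      (hmono hs1 (by simp at hj ⊢; omega) (by simp at hj; omega)) hNR.le) 1
  calc traffic N M K ≤ s + r / (1 - r) :=
        sum_prod_Icc_le_add_div_one_sub _ hsK.le (hx0 _ hs1) hr1 hx0
          (fun j hj => one_sub_div_le_one h0 j (by simp at hj ⊢; omega)) hxr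
    _ ≤ s + 4 * (s + 1) * r := add_le_add le_rfl (div_one_sub_le_mul (hx0 _ hs1) hr1 hc)

end Traffic

/-- Theorem 4 (Order optimality of scheme `F_o`): with `K ≤ N` users, the traffic volume
of the decentralized coded caching scheme with zero-padding is within a factor `12` of
the cut-set bound `max_{1 ≤ s ≤ K} (s - (∑_{i=1}^s M_i)/⌊N/s⌋)`. -/
theorem order_optimality (N K : ℕ) (hN : 0 < N) (hK : 0 < K) (hKN : K ≤ N)
    (M : ℕ → ℝ)
    (hmono : ∀ i ∈ Finset.Icc 1 K, ∀ j ∈ Finset.Icc 1 K, i ≤ j → M i ≤ M j)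
    (h0 : ∀ j ∈ Finset.Icc 1 K, 0 ≤ M j)
    (hle : ∀ j ∈ Finset.Icc 1 K, M j ≤ (N : ℝ)) :
    (∑ i ∈ Finset.Icc 1 K, ∏ j ∈ Finset.Icc 1 i, (1 - M j / (N : ℝ)))
      ≤ 12 * (Finset.Icc 1 K).sup' (Finset.nonempty_Icc.mpr hK)
          (fun s => (s : ℝ) - (∑ i ∈ Finset.Icc 1 s, M i) / ((N / s : ℕ) : ℝ)) := by
  change traffic N M K ≤ 12 * (Icc 1 K).sup' _ (cutSetTerm N M)
  set T := (Icc 1 K).sup' (nonempty_Icc.mpr hK) (cutSetTerm N M)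
  have hT : ∀ s ∈ Icc 1 K, cutSetTerm N M s ≤ T := fun s hs => le_sup' (cutSetTerm N M) hs
  classical
  set s := Nat.findGreatest (fun s => ∑ i ∈ Icc 1 s, M i ≤ N / 4) K
  have hAs : ∑ i ∈ Icc 1 s, M i ≤ N / 4 :=
    Nat.findGreatest_spec (P := fun s => ∑ i ∈ Icc 1 s, M i ≤ N / 4) (Nat.zero_le K)
      (by simp; positivity)
  have hsK : s ≤ K := Nat.findGreatest_le K
  rcases hsK.lt_or_eq with hlt | heq
  · have hR := traffic_le_of_lt_sum hN hmono h0 hle hlt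
      (not_le.mp (Nat.findGreatest_is_greatest (lt_add_one s) hlt))
    rcases Nat.eq_zero_or_pos s with hs0 | hs0
    · rw [hs0] at hR
      have hT1 := cutSetTerm_one N M ▸ hT 1 (by simp; omega)
      norm_num at hR
      linarith [one_sub_div_nonneg hN hle 1 (by simp; omega)]
    · have hTs := (le_cutSetTerm_of_sum_le hs0 (hsK.trans hKN) hAs).trans (hT s (by simp; omega))
      have hs1 : (1 : ℝ) ≤ s := by exact_mod_cast hs0
      nlinarith [one_sub_div_le_one (N := N) h0 (s + 1) (by simp; omega)]
  · rw [heq] at hAs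
    have hTK := (le_cutSetTerm_of_sum_le hK hKN hAs).trans (hT K (by simp; omega))
    linarith [traffic_le hN h0 hle]
end
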